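/- Let ε be a real number with 0 < ε ≤ 1 and b ≥ 1 an integer. For every integer i with 1 ≤ i ≤ h and every real x with (ε/b)·v ≤ x ≤ v, the polynomial g_i satisfies 1/4 ≤ g_i(x) ≤ 1 − ε/(6·b·v^{q−2}). -/

import Mathlib

/-- `T p x` is the degree-`p` Taylor polynomial of the exponential function at `0`. -/
noncomputable def taylorExp (p : ℕ) (x : ℝ) : ℝ :=
  ∑ j ∈ Finset.range (p + 1), x ^ j / (Nat.factorial j : ℝ)

/-- The round reward polynomial `g_i(x) = T_p(−x/(v^{q−1}·(3 − i/h)))`. -/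
noncomputable def roundPoly (v h p q : ℕ) (i : ℕ) (x : ℝ) : ℝ :=
  taylorExp p (-(x / ((v : ℝ) ^ (q - 1) * (3 - (i : ℝ) / (h : ℝ)))))

/-!
Write `g_i(x) = T_p(-y)` with `y = x / (v^{q-1}(3 - i/h))`. Since `3 - i/h ∈ [2, 3]`, the hypotheses
on `x` place `y` in `[ε/(3 b v^{q-2}), 1/2]`. The remainder bound for the exponential series puts
both `T_p(-y)` (for `p ≥ 2`) and `T_2(-y) = 1 - y + y²/2` within `2y³/9` of `exp(-y)`, and on
`[0, 1/2]` this yields `1 - y ≤ T_p(-y) ≤ 1 - y/2`.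
-/

open Real Set

lemma taylorExp_two (x : ℝ) : taylorExp 2 x = 1 + x + x ^ 2 / 2 := by
  simp [taylorExp, Finset.sum_range_succ, Nat.factorial]

lemma succ_div_factorial_mul_le {n : ℕ} (hn : 3 ≤ n) :
    ((n + 1 : ℕ) : ℝ) / (n.factorial * n) ≤ 2 / 9 := by
  have hfac : (6 : ℝ) ≤ n.factorial := by exact_mod_cast Nat.factorial_le hn
  have hn' : (3 : ℝ) ≤ n := by exact_mod_cast hn
  rw [div_le_div_iff₀ (by positivity) (by norm_num)]
  push_cast
  nlinarith

lemma abs_exp_sub_taylorExp_le {p : ℕ} (hp : 2 ≤ p) {x : ℝ} (hx : |x| ≤ 1) :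
    |exp x - taylorExp p x| ≤ 2 / 9 * |x| ^ 3 := by
  calc |exp x - taylorExp p x|
      ≤ |x| ^ (p + 1) * (((p + 1).succ : ℕ) / ((p + 1).factorial * (p + 1 : ℕ))) :=
        Real.exp_bound hx p.succ_pos
    _ ≤ |x| ^ 3 * (2 / 9) :=
        mul_le_mul (pow_le_pow_of_le_one (abs_nonneg x) hx (by omega))
          (succ_div_factorial_mul_le (by omega)) (by positivity) (by positivity)
    _ = 2 / 9 * |x| ^ 3 := mul_comm _ _

lemma abs_taylorExp_sub_quadratic_le {p : ℕ} (hp : 2 ≤ p) {x : ℝ} (hx : |x| ≤ 1) :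
    |taylorExp p x - (1 + x + x ^ 2 / 2)| ≤ 4 / 9 * |x| ^ 3 := by
  rw [← taylorExp_two]
  calc |taylorExp p x - taylorExp 2 x|
      ≤ |taylorExp p x - exp x| + |exp x - taylorExp 2 x| := abs_sub_le _ _ _
    _ ≤ 2 / 9 * |x| ^ 3 + 2 / 9 * |x| ^ 3 := by
        rw [abs_sub_comm]
        gcongr <;> exact abs_exp_sub_taylorExp_le (by omega) hx
    _ = 4 / 9 * |x| ^ 3 := by ring

lemma taylorExp_neg_mem_Icc {p : ℕ} (hp : 2 ≤ p) {y : ℝ} (hy0 : 0 ≤ y) (hy : y ≤ 1 / 2) :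
    taylorExp p (-y) ∈ Icc (1 - y) (1 - y / 2) := by
  have hclose := abs_taylorExp_sub_quadratic_le hp (x := -y)
    (by rw [abs_neg, abs_of_nonneg hy0]; linarith)
  rw [abs_neg, abs_of_nonneg hy0, abs_le] at hclose
  have hcube : 4 / 9 * y ^ 3 ≤ y ^ 2 / 2 := by nlinarith [sq_nonneg y]
  have hsq : y ^ 2 / 2 ≤ y / 4 := by nlinarith
  constructor <;> nlinarith [hclose.1, hclose.2]

lemma three_sub_div_mem_Icc {i h : ℕ} (hih : i ≤ h) : 3 - (i : ℝ) / h ∈ Icc 2 3 := by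
  have hle : (i : ℝ) / h ≤ 1 := div_le_one_of_le₀ (by exact_mod_cast hih) (by positivity)
  have hnonneg : 0 ≤ (i : ℝ) / h := by positivity
  constructor <;> linarith

lemma div_mul_mul_mem_Icc {a v w d x : ℝ} (ha : 0 ≤ a) (hv : 0 < v) (hw : 1 ≤ w)
    (hd : d ∈ Icc 2 3) (hx1 : a * v ≤ x) (hx2 : x ≤ v) :
    x / (v * w * d) ∈ Icc (a / (3 * w)) (1 / 2) := by
  obtain ⟨hd2, hd3⟩ := hd
  have hx0 : 0 ≤ x := le_trans (by positivity) hx1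
  have hwd : 2 ≤ w * d := by nlinarith
  have hwd3 : w * d ≤ 3 * w := by nlinarith
  constructor
  · rw [div_le_div_iff₀ (by positivity) (by positivity)]
    nlinarith [mul_le_mul_of_nonneg_right hx1 (by positivity : 0 ≤ w * d),
      mul_le_mul_of_nonneg_left hwd3 hx0]
  · rw [div_le_iff₀ (by positivity)]
    nlinarith

theorem roundPoly_range_general (v h p q : ℕ) (hv : 2 ≤ v) (hp : 2 ≤ p) (hq : 2 ≤ q)
    (ε : ℝ) (hε0 : 0 < ε) (b : ℕ)
    (i : ℕ) (hih : i ≤ h)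
    (x : ℝ) (hx1 : ε / (b : ℝ) * (v : ℝ) ≤ x) (hx2 : x ≤ (v : ℝ)) :
    1 / 4 ≤ roundPoly v h p q i x ∧
    roundPoly v h p q i x ≤ 1 - ε / (6 * (b : ℝ) * (v : ℝ) ^ (q - 2)) := by
  have hw : 1 ≤ (v : ℝ) ^ (q - 2) := one_le_pow₀ (by exact_mod_cast (by omega : 1 ≤ v))
  have hpow : (v : ℝ) ^ (q - 1) = v * v ^ (q - 2) := by
    rw [show q - 1 = q - 2 + 1 by omega, pow_succ']
  obtain ⟨hy_lower, hy_half⟩ := div_mul_mul_mem_Icc (by positivity) (by positivity) hw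
    (three_sub_div_mem_Icc hih) hx1 hx2
  have hy0 := le_trans (by positivity) hy_lower
  obtain ⟨hlow, hupp⟩ := taylorExp_neg_mem_Icc hp hy0 hy_half
  have hbound : ε / (6 * b * v ^ (q - 2)) = ε / b / (3 * v ^ (q - 2)) / 2 := by ring
  rw [roundPoly, hpow, hbound]
  exact ⟨by linarith, by linarith⟩

/-- Claim 3.1, range bound: for `0 < ε ≤ 1`, `b ≥ 1`, every `1 ≤ i ≤ h`
and every real `x` with `(ε/b)·v ≤ x ≤ v`, we have `1/4 ≤ g_i(x) ≤ 1 − ε/(6·b·v^{q−2})`. -/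
theorem roundPoly_range (v h p q : ℕ) (hv : 2 ≤ v) (hh : 1 ≤ h) (hp : 2 ≤ p) (hq : 2 ≤ q)
    (ε : ℝ) (hε0 : 0 < ε) (hε1 : ε ≤ 1) (b : ℕ) (hb : 1 ≤ b)
    (i : ℕ) (hi1 : 1 ≤ i) (hih : i ≤ h)
    (x : ℝ) (hx1 : ε / (b : ℝ) * (v : ℝ) ≤ x) (hx2 : x ≤ (v : ℝ)) :
    1 / 4 ≤ roundPoly v h p q i x ∧
    roundPoly v h p q i x ≤ 1 - ε / (6 * (b : ℝ) * (v : ℝ) ^ (q - 2)) :=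
  roundPoly_range_general v h p q hv hp hq ε hε0 b i hih x hx1 hx2
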